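/- arXiv:1606.09382 — 2 statements merged into one kernel-verified Lean document; each statement's English description precedes it below -/
import Mathlib

section
/- Let a > 0, m ≥ 1 an integer, 0 < ν < 1, and let f : ℝ → ℝ be m times continuously differentiable on [0, a] (with sup_{x∈[0,a]} |f^{(m)}(x)| < ∞). Then the limit as ε → 0⁺ of [ ∫_ε^a f(x)/x^{m+ν} dx − Σ_{j=0}^{m−1} (f^{(j)}(0)/(j! (m+ν−j−1))) ε^{−(m+ν−j−1)} ] exists and is finite; that is, the Hadamard finite part of the divergent integral ∫_0^a f(x)/x^{m+ν} dx is well defined. -/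
/-!
Subtract from `f` its Taylor polynomial `T` of degree `m - 1` at `0`. Each monomial of `T`
integrates explicitly against `x ^ (-(m + ν))` on `[ε, a]`, producing exactly the subtracted
term `ε ^ (-(m + ν - j - 1))` plus a constant. By Taylor's theorem `|f - T| ≤ C x ^ m`, so
`(f - T) / x ^ (m + ν) = O(x ^ (-ν))` is integrable on `(0, a]` because `ν < 1`, and the
integral of it over `[ε, a]` converges as `ε → 0⁺`.
-/

open MeasureTheory Filter Set
open scoped Nat Topology

noncomputable def taylorSum (c : ℕ → ℝ) (m : ℕ) (x : ℝ) : ℝ :=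
  ∑ j ∈ Finset.range m, c j / j ! * x ^ j

lemma continuous_taylorSum (c : ℕ → ℝ) (m : ℕ) : Continuous (taylorSum c m) := by
  unfold taylorSum
  fun_prop

/-- At `m = 0` the truncated subtraction makes `(m - 1)! = 1`, and the bound is `hM` itself. -/
lemma abs_sub_taylorSum_le {f : ℝ → ℝ} {a M x : ℝ} {m : ℕ} (ha : 0 ≤ a)
    (hf : ContDiffOn ℝ m f (Icc 0 a))
    (hM : ∀ y ∈ Icc 0 a, |iteratedDerivWithin m f (Icc 0 a) y| ≤ M) (hx : x ∈ Icc 0 a) :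
    |f x - taylorSum (fun j => iteratedDerivWithin j f (Icc 0 a) 0) m x| ≤
      M / (m - 1)! * x ^ m := by
  cases m with
  | zero => simpa [taylorSum] using hM x hx
  | succ n =>
    have hT : taylorWithinEval f n (Icc 0 a) 0 x =
        taylorSum (fun j => iteratedDerivWithin j f (Icc 0 a) 0) (n + 1) x := by
      rw [taylor_within_apply, taylorSum]
      refine Finset.sum_congr rfl fun j _ => ?_
      simp only [smul_eq_mul, sub_zero]
      ring
    have := taylor_mean_remainder_bound ha hf hx hM
    rw [hT, sub_zero] at this
    simpa [mul_div_right_comm] using this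

lemma integrableOn_div_rpow_of_abs_le {g : ℝ → ℝ} {a C ρ : ℝ} {m : ℕ}
    (hg : ContinuousOn g (Ioc 0 a)) (hρ : ρ < m + 1)
    (hbound : ∀ x ∈ Ioc 0 a, |g x| ≤ C * x ^ m) :
    IntegrableOn (fun x => g x / x ^ ρ) (Ioc 0 a) := by
  have hdom : IntegrableOn (fun x : ℝ => C * x ^ ((m : ℝ) - ρ)) (Ioc 0 a) :=
    (intervalIntegrable_iff.1
      ((intervalIntegral.intervalIntegrable_rpow' (by linarith)).const_mul C)).mono_set
        Ioc_subset_uIoc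
  have hcont : ContinuousOn (fun x => g x / x ^ ρ) (Ioc 0 a) :=
    hg.div (continuousOn_id.rpow_const fun x hx => Or.inl hx.1.ne')
      fun x hx => (Real.rpow_pos_of_pos hx.1 ρ).ne'
  refine hdom.mono' (hcont.aestronglyMeasurable measurableSet_Ioc) ?_
  refine (ae_restrict_iff' measurableSet_Ioc).2 (Eventually.of_forall fun x hx => ?_)
  have hxρ : 0 < x ^ ρ := Real.rpow_pos_of_pos hx.1 ρ
  calc ‖g x / x ^ ρ‖ = |g x| / x ^ ρ := by rw [Real.norm_eq_abs, abs_div, abs_of_pos hxρ]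
    _ ≤ C * x ^ m / x ^ ρ := by gcongr; exact hbound x hx
    _ = C * x ^ ((m : ℝ) - ρ) := by rw [Real.rpow_sub hx.1, Real.rpow_natCast, mul_div_assoc]

lemma integral_taylorSum_div_rpow (c : ℕ → ℝ) (m : ℕ) {ρ ε a : ℝ}
    (hε : 0 < ε) (ha : 0 < a) (hρ : ∀ j < m, (j : ℝ) + 1 ≠ ρ) :
    ∫ x in ε..a, taylorSum c m x / x ^ ρ =
      ∑ j ∈ Finset.range m,
        c j / (j ! * (ρ - j - 1)) * (ε ^ (-(ρ - j - 1)) - a ^ (-(ρ - j - 1))) := by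
  have h0 : (0 : ℝ) ∉ uIcc ε a := notMem_uIcc_of_lt hε ha
  have hexpand : ∀ x ∈ uIcc ε a,
      taylorSum c m x / x ^ ρ = ∑ j ∈ Finset.range m, c j / j ! * x ^ ((j : ℝ) - ρ) := by
    intro x hx
    have hx0 : 0 < x := (lt_min hε ha).trans_le hx.1
    rw [taylorSum, Finset.sum_div]
    refine Finset.sum_congr rfl fun j _ => ?_
    rw [Real.rpow_sub hx0, Real.rpow_natCast]
    ring
  rw [intervalIntegral.integral_congr hexpand, intervalIntegral.integral_finsetSum fun j _ =>
    (intervalIntegral.intervalIntegrable_rpow (Or.inr h0)).const_mul _]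
  refine Finset.sum_congr rfl fun j hj => ?_
  have hj : (j : ℝ) + 1 ≠ ρ := hρ j (Finset.mem_range.1 hj)
  have hα : ρ - j - 1 ≠ 0 := fun h => hj (by linarith)
  rw [intervalIntegral.integral_const_mul, integral_rpow
    (Or.inr ⟨fun h => hj (by linarith), h0⟩), show (j : ℝ) - ρ + 1 = -(ρ - j - 1) by ring]
  field_simp
  ring

lemma tendsto_intervalIntegral_nhdsGT {g : ℝ → ℝ} {b a : ℝ} (hba : b < a)
    (hg : IntegrableOn g (Ioc b a)) :
    Tendsto (fun ε => ∫ x in ε..a, g x) (𝓝[>] b) (𝓝 (∫ x in b..a, g x)) := by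
  have hcont := intervalIntegral.continuousOn_primitive_interval_left (μ := volume)
    (by rwa [uIcc_of_le hba.le, integrableOn_Icc_iff_integrableOn_Ioc] : IntegrableOn g (uIcc b a))
  refine (hcont b left_mem_uIcc).tendsto.mono_left ?_
  rw [uIcc_of_le hba.le, ← nhdsWithin_Ioc_eq_nhdsGT hba]
  exact nhdsWithin_mono _ Ioc_subset_Icc_self

theorem finite_part_branch_exists_general (a : ℝ) (ha : 0 < a) (m : ℕ)
    (ν : ℝ) (hν0 : 0 < ν) (hν1 : ν < 1) (f : ℝ → ℝ)
    (hf : ContDiffOn ℝ m f (Icc 0 a))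
    (M : ℝ)
    (hM : ∀ x ∈ Icc 0 a, |iteratedDerivWithin m f (Icc 0 a) x| ≤ M) :
    ∃ L : ℝ, Tendsto (fun ε : ℝ =>
        (∫ x in ε..a, f x / x ^ ((m : ℝ) + ν))
        - (∑ j ∈ Finset.range m,
            iteratedDerivWithin j f (Icc 0 a) 0 /
                ((j.factorial : ℝ) * ((m : ℝ) + ν - j - 1)) *
              ε ^ (-((m : ℝ) + ν - j - 1))))
      (nhdsWithin 0 (Ioi 0)) (nhds L) := by
  set ρ : ℝ := m + ν
  set c : ℕ → ℝ := fun j => iteratedDerivWithin j f (Icc 0 a) 0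
  set R : ℝ → ℝ := fun x => (f x - taylorSum c m x) / x ^ ρ
  have hR : IntegrableOn R (Ioc 0 a) :=
    integrableOn_div_rpow_of_abs_le
      ((hf.continuousOn.sub (continuous_taylorSum c m).continuousOn).mono Ioc_subset_Icc_self)
      (by linarith) fun x hx => abs_sub_taylorSum_le ha.le hf hM (Ioc_subset_Icc_self hx)
  refine ⟨(∫ x in 0..a, R x) - ∑ j ∈ Finset.range m, c j / (j ! * (ρ - j - 1)) *
    a ^ (-(ρ - j - 1)), ((tendsto_intervalIntegral_nhdsGT ha hR).sub_const _).congr' ?_⟩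
  filter_upwards [Ioo_mem_nhdsGT ha] with ε ⟨hε, hεa⟩
  have hT : IntervalIntegrable (fun x => taylorSum c m x / x ^ ρ) volume ε a := by
    refine ContinuousOn.intervalIntegrable ((continuous_taylorSum c m).continuousOn.div
      (continuousOn_id.rpow_const fun x _ => Or.inr (by positivity)) fun x hx => ?_)
    exact (Real.rpow_pos_of_pos ((lt_min hε ha).trans_le hx.1) ρ).ne'
  have hR' : IntervalIntegrable R volume ε a :=
    (intervalIntegrable_iff_integrableOn_Ioc_of_le hεa.le).2
      (hR.mono_set (Ioc_subset_Ioc_left hε.le))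
  have hsplit : ∫ x in ε..a, f x / x ^ ρ =
      (∫ x in ε..a, taylorSum c m x / x ^ ρ) + ∫ x in ε..a, R x := by
    rw [← intervalIntegral.integral_add hT hR']
    simp only [R, ← add_div, add_sub_cancel]
  have hρ : ∀ j < m, (j : ℝ) + 1 ≠ ρ := fun j hj => by
    have : (j : ℝ) + 1 ≤ m := by exact_mod_cast hj
    linarith
  rw [hsplit, integral_taylorSum_div_rpow c m hε ha hρ]
  simp only [mul_sub, Finset.sum_sub_distrib]
  ring

/-- For `a > 0`, an integer `m ≥ 1`, `0 < ν < 1`, and `f` that is `m` times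
continuously differentiable on `[0, a]` with bounded `m`-th derivative, the Hadamard finite
part of the divergent integral `∫_0^a f(x)/x^{m+ν} dx` is well defined, i.e. the limit as
`ε → 0⁺` of `∫_ε^a f(x)/x^{m+ν} dx − Σ_{j<m} f^{(j)}(0)/(j!(m+ν−j−1)) ε^{−(m+ν−j−1)}`
exists and is finite. -/
theorem finite_part_branch_exists (a : ℝ) (ha : 0 < a) (m : ℕ) (hm : 1 ≤ m)
    (ν : ℝ) (hν0 : 0 < ν) (hν1 : ν < 1) (f : ℝ → ℝ)
    (hf : ContDiffOn ℝ m f (Icc 0 a))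
    (M : ℝ)
    (hM : ∀ x ∈ Icc 0 a, |iteratedDerivWithin m f (Icc 0 a) x| ≤ M) :
    ∃ L : ℝ, Tendsto (fun ε : ℝ =>
        (∫ x in ε..a, f x / x ^ ((m : ℝ) + ν))
        - (∑ j ∈ Finset.range m,
            iteratedDerivWithin j f (Icc 0 a) 0 /
                ((j.factorial : ℝ) * ((m : ℝ) + ν - j - 1)) *
              ε ^ (-((m : ℝ) + ν - j - 1))))
      (nhdsWithin 0 (Ioi 0)) (nhds L) :=
  finite_part_branch_exists_general a ha m ν hν0 hν1 f hf M hM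
end

section
/- For every j ∈ ℕ and every ν with 0 < ν < 1, the finite part integral of ∫_0^a e^{−x}/x^{j+1+ν} dx tends, as a → ∞, to (−1)^{j+1} Γ(1−ν) Γ(ν) / Γ(j+ν+1); that is, lim_{a→∞} lim_{ε→0⁺} [ ∫_ε^a e^{−x}/x^{j+1+ν} dx − Σ_{k=0}^{j} ((−1)^k/(k! (j+ν−k))) ε^{−(j+ν−k)} ] = (−1)^{j+1} Γ(1−ν) Γ(ν) / Γ(j+ν+1), where Γ is the Gamma function. -/
/-!
Split `e^{-x} = ∑_{k<n} (-x)^k/k! + R_n(x)`. Against `x^{-(p+1)}` the polynomial part integrates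
exactly over `[ε, a]`, producing precisely the subtracted counterterms at `ε` and terms at `a` that
vanish as `a → ∞`; so the limit is `∫_0^∞ R_{j+1}(x) x^{-(j+1+ν)} dx`.

With this indexing `R_0 = e^{-x}` and `R_{n+1}' = -R_n`, and on `x ≥ 0` one has
`|R_n(x)| ≤ x^n/n!` and `|R_{n+1}(x)| ≤ 2x^n/n!`, so the boundary terms of an integration by parts
on `(0, ∞)` vanish and `∫ R_{n+1} x^{-(n+1+ν)} = -(n+ν)⁻¹ ∫ R_n x^{-(n+ν)}`. The recursion ends at
`∫ e^{-x} x^{-ν} = Γ(1-ν)`, and `Γ(n+1+ν) = (n+ν) Γ(n+ν)` assembles the factors.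
-/

open MeasureTheory Filter Set Topology

noncomputable def expNegTaylorRemainder (n : ℕ) (x : ℝ) : ℝ :=
  Real.exp (-x) - ∑ k ∈ Finset.range n, (-x) ^ k / k.factorial

section ExpNegTaylorRemainder

variable (n : ℕ) (x : ℝ)

@[simp]
lemma expNegTaylorRemainder_zero : expNegTaylorRemainder 0 x = Real.exp (-x) := by
  simp [expNegTaylorRemainder]

lemma expNegTaylorRemainder_succ :
    expNegTaylorRemainder (n + 1) x = expNegTaylorRemainder n x - (-x) ^ n / n.factorial := by
  simp only [expNegTaylorRemainder, Finset.sum_range_succ]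
  ring

@[simp]
lemma expNegTaylorRemainder_succ_zero : expNegTaylorRemainder (n + 1) 0 = 0 := by
  simp [expNegTaylorRemainder, Finset.sum_range_succ']

lemma continuous_expNegTaylorRemainder : Continuous (expNegTaylorRemainder n) := by
  unfold expNegTaylorRemainder
  fun_prop

lemma hasDerivAt_expNegTaylorRemainder_succ :
    HasDerivAt (expNegTaylorRemainder (n + 1)) (-expNegTaylorRemainder n x) x := by
  induction n with
  | zero =>
    have h : expNegTaylorRemainder 1 = fun y => Real.exp (-y) - 1 := by
      ext y; simp [expNegTaylorRemainder]
    simpa [h] using ((hasDerivAt_neg x).exp).sub_const 1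
  | succ n ih =>
    have hpow := ((hasDerivAt_neg x).pow (n + 1)).div_const ((n + 1).factorial : ℝ)
    have h : expNegTaylorRemainder (n + 2) =
        fun y => expNegTaylorRemainder (n + 1) y - (-y) ^ (n + 1) / (n + 1).factorial :=
      funext (expNegTaylorRemainder_succ (n + 1))
    rw [h]
    refine (ih.sub hpow).congr_deriv ?_
    rw [expNegTaylorRemainder_succ, Nat.factorial_succ]
    push_cast
    field_simp
    ring

variable {x}

lemma abs_expNegTaylorRemainder_le (hx : 0 ≤ x) :
    |expNegTaylorRemainder n x| ≤ x ^ n / n.factorial := by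
  induction n generalizing x with
  | zero => simpa [abs_of_pos (Real.exp_pos _)] using hx
  | succ n ih =>
    have hB : ∀ y, HasDerivAt (fun y : ℝ => y ^ (n + 1) / (n + 1).factorial)
        (y ^ n / n.factorial) y := by
      intro y
      refine ((hasDerivAt_pow (n + 1) y).div_const ((n + 1).factorial : ℝ)).congr_deriv ?_
      rw [Nat.factorial_succ]
      push_cast
      field_simp
    refine image_norm_le_of_norm_deriv_right_le_deriv_boundary (a := 0) (b := x)
      (continuous_expNegTaylorRemainder _).continuousOn
      (fun y _ => (hasDerivAt_expNegTaylorRemainder_succ n y).hasDerivWithinAt)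
      (by simp) hB (fun y hy => ?_) ⟨hx, le_rfl⟩
    simpa only [Real.norm_eq_abs, abs_neg] using ih hy.1

lemma abs_expNegTaylorRemainder_succ_le (hx : 0 ≤ x) :
    |expNegTaylorRemainder (n + 1) x| ≤ 2 * (x ^ n / n.factorial) := by
  rw [expNegTaylorRemainder_succ]
  calc _ ≤ |expNegTaylorRemainder n x| + |(-x) ^ n / n.factorial| := abs_sub _ _
    _ ≤ x ^ n / n.factorial + x ^ n / n.factorial := by
      gcongr
      · exact abs_expNegTaylorRemainder_le n hx
      · rw [abs_div, abs_pow, abs_neg, abs_of_nonneg hx, Nat.abs_cast]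
    _ = _ := by ring

lemma abs_expNegTaylorRemainder_mul_rpow_le (hx : 0 < x) (p : ℝ) :
    |expNegTaylorRemainder n x * x ^ (-p)| ≤ x ^ ((n : ℝ) - p) / n.factorial := by
  rw [abs_mul, abs_of_pos (Real.rpow_pos_of_pos hx _), sub_eq_add_neg, Real.rpow_add hx,
    Real.rpow_natCast, mul_div_right_comm]
  exact mul_le_mul_of_nonneg_right (abs_expNegTaylorRemainder_le n hx.le)
    (Real.rpow_nonneg hx.le _)

lemma abs_expNegTaylorRemainder_succ_mul_rpow_le (hx : 0 < x) (p : ℝ) :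
    |expNegTaylorRemainder (n + 1) x * x ^ (-p)| ≤ 2 * (x ^ ((n : ℝ) - p) / n.factorial) := by
  rw [abs_mul, abs_of_pos (Real.rpow_pos_of_pos hx _), sub_eq_add_neg, Real.rpow_add hx,
    Real.rpow_natCast, mul_div_right_comm]
  calc _ ≤ 2 * (x ^ n / n.factorial) * x ^ (-p) :=
        mul_le_mul_of_nonneg_right (abs_expNegTaylorRemainder_succ_le n hx.le)
          (Real.rpow_nonneg hx.le _)
    _ = _ := by ring

variable {ν : ℝ}

lemma integrableOn_expNegTaylorRemainder_mul_rpow (hν0 : 0 < ν) (hν1 : ν < 1) :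
    IntegrableOn (fun x => expNegTaylorRemainder n x * x ^ (-((n : ℝ) + ν))) (Ioi 0) := by
  cases n with
  | zero =>
    simpa [sub_eq_add_neg] using Real.GammaIntegral_convergent (s := 1 - ν) (by linarith)
  | succ n =>
    have hmeas : AEStronglyMeasurable
        (fun x => expNegTaylorRemainder (n + 1) x * x ^ (-(((n + 1 : ℕ) : ℝ) + ν))) :=
      ((continuous_expNegTaylorRemainder _).measurable.mul (by fun_prop)).aestronglyMeasurable
    set p : ℝ := ((n + 1 : ℕ) : ℝ) + ν
    have hnear : IntegrableOn (fun x : ℝ => x ^ (((n + 1 : ℕ) : ℝ) - p) / (n + 1).factorial)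
        (Ioc 0 1) :=
      (intervalIntegral.intervalIntegrable_rpow' (by linarith)).1.div_const _
    have hfar : IntegrableOn (fun x : ℝ => 2 * (x ^ ((n : ℝ) - p) / n.factorial)) (Ioi 1) :=
      ((integrableOn_Ioi_rpow_of_lt (by push_cast [p]; linarith) one_pos).div_const _).const_mul 2
    rw [← Ioc_union_Ioi_eq_Ioi zero_le_one]
    refine IntegrableOn.union (hnear.mono' hmeas.restrict ?_) (hfar.mono' hmeas.restrict ?_)
    · filter_upwards [ae_restrict_mem measurableSet_Ioc] with x hx
      exact abs_expNegTaylorRemainder_mul_rpow_le _ hx.1 _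
    · filter_upwards [ae_restrict_mem measurableSet_Ioi] with x hx
      exact abs_expNegTaylorRemainder_succ_mul_rpow_le _ (zero_lt_one.trans hx) _

lemma tendsto_expNegTaylorRemainder_succ_mul_rpow_nhdsGT (hν1 : ν < 1) :
    Tendsto (fun x => expNegTaylorRemainder (n + 1) x * x ^ (-((n : ℝ) + ν))) (𝓝[>] 0) (𝓝 0) := by
  have hr : 0 < ((n + 1 : ℕ) : ℝ) - (n + ν) := by push_cast; linarith
  have hlim : Tendsto (fun x : ℝ => x ^ (((n + 1 : ℕ) : ℝ) - (n + ν)) / (n + 1).factorial)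
      (𝓝[>] 0) (𝓝 0) := by
    have h := (Real.continuousAt_rpow_const 0 _ (Or.inr hr.le)).tendsto.div_const
      ((n + 1).factorial : ℝ)
    rw [Real.zero_rpow hr.ne', zero_div] at h
    exact h.mono_left nhdsWithin_le_nhds
  refine squeeze_zero_norm' ?_ hlim
  filter_upwards [self_mem_nhdsWithin] with x hx
  exact abs_expNegTaylorRemainder_mul_rpow_le _ hx _

lemma tendsto_expNegTaylorRemainder_succ_mul_rpow_atTop (hν0 : 0 < ν) :
    Tendsto (fun x => expNegTaylorRemainder (n + 1) x * x ^ (-((n : ℝ) + ν))) atTop (𝓝 0) := by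
  have hlim : Tendsto (fun x : ℝ => 2 * (x ^ ((n : ℝ) - (n + ν)) / n.factorial)) atTop (𝓝 0) := by
    simpa [sub_add_cancel_left] using
      ((tendsto_rpow_neg_atTop hν0).div_const (n.factorial : ℝ)).const_mul 2
  refine squeeze_zero_norm' ?_ hlim
  filter_upwards [eventually_gt_atTop 0] with x hx
  exact abs_expNegTaylorRemainder_succ_mul_rpow_le _ hx _

lemma integral_expNegTaylorRemainder_succ_mul_rpow (hν0 : 0 < ν) (hν1 : ν < 1) :
    ∫ x in Ioi 0, expNegTaylorRemainder (n + 1) x * x ^ (-((n : ℝ) + 1 + ν)) =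
      -(∫ x in Ioi 0, expNegTaylorRemainder n x * x ^ (-((n : ℝ) + ν))) / (n + ν) := by
  have hq : (n : ℝ) + ν ≠ 0 := by positivity
  have hv : ∀ x ∈ Ioi (0 : ℝ), HasDerivAt (fun x => x ^ (-((n : ℝ) + ν)))
      (-((n : ℝ) + ν) * x ^ (-((n : ℝ) + 1 + ν))) x := fun x hx =>
    (Real.hasDerivAt_rpow_const (Or.inl (ne_of_gt hx))).congr_deriv (by ring_nf)
  have hint := integrableOn_expNegTaylorRemainder_mul_rpow (n + 1) hν0 hν1
  push_cast at hint
  have hibp := integral_Ioi_mul_deriv_eq_deriv_mul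
    (fun x _ => hasDerivAt_expNegTaylorRemainder_succ n x) hv
    (IntegrableOn.congr_fun (hint.const_mul (-((n : ℝ) + ν)))
      (fun x _ => by simp only [Pi.mul_apply]; ring) measurableSet_Ioi)
    ((integrableOn_expNegTaylorRemainder_mul_rpow n hν0 hν1).neg.congr_fun
      (fun x _ => by simp only [Pi.mul_apply, Pi.neg_apply, neg_mul]) measurableSet_Ioi)
    (tendsto_expNegTaylorRemainder_succ_mul_rpow_nhdsGT n hν1)
    (tendsto_expNegTaylorRemainder_succ_mul_rpow_atTop n hν0)
  simp only [mul_neg, mul_left_comm (expNegTaylorRemainder (n + 1) _), integral_const_mul, neg_mul,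
    integral_neg, sub_zero, zero_sub, neg_neg] at hibp
  field_simp
  linarith

lemma integral_expNegTaylorRemainder_mul_rpow (hν0 : 0 < ν) (hν1 : ν < 1) :
    ∫ x in Ioi 0, expNegTaylorRemainder n x * x ^ (-((n : ℝ) + ν)) =
      (-1) ^ n * Real.Gamma (1 - ν) * Real.Gamma ν / Real.Gamma (n + ν) := by
  induction n with
  | zero =>
    have hΓ : Real.Gamma ν ≠ 0 := (Real.Gamma_pos_of_pos hν0).ne'
    rw [Real.Gamma_eq_integral (by linarith : 0 < 1 - ν)]
    simp [hΓ, sub_sub_cancel_left]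
  | succ n ih =>
    have hΓ : Real.Gamma ((n : ℝ) + 1 + ν) = (n + ν) * Real.Gamma (n + ν) := by
      rw [add_right_comm, Real.Gamma_add_one (by positivity)]
    have hΓ' : Real.Gamma ((n : ℝ) + ν) ≠ 0 := (Real.Gamma_pos_of_pos (by positivity)).ne'
    push_cast
    rw [integral_expNegTaylorRemainder_succ_mul_rpow n hν0 hν1, ih, hΓ]
    field_simp
    ring

end ExpNegTaylorRemainder

lemma intervalIntegral_rpow_neg_sub_one {p ε a : ℝ} (hp : p ≠ 0) (hε : 0 < ε) (ha : 0 < a) :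
    ∫ x in ε..a, x ^ (-p - 1) = (ε ^ (-p) - a ^ (-p)) / p := by
  rw [integral_rpow (Or.inr ⟨by simpa using hp, notMem_uIcc_of_lt hε ha⟩), sub_add_cancel,
    div_neg, ← neg_div, neg_sub]

lemma tendsto_intervalIntegral_nhdsGT_s15 {f : ℝ → ℝ} {a b : ℝ} (hab : a < b)
    (hf : IntervalIntegrable f volume a b) :
    Tendsto (fun ε => ∫ x in ε..b, f x) (𝓝[>] a) (𝓝 (∫ x in a..b, f x)) := by
  have h := intervalIntegral.continuousWithinAt_primitive (f := f) (μ := volume) (a := b)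
    (b₀ := a) (b₁ := a) (b₂ := b) (measure_singleton a)
    (by rwa [min_eq_right hab.le, max_self])
  simpa only [intervalIntegral.integral_symm b, neg_neg] using
    (h.mono_of_mem_nhdsWithin (Icc_mem_nhdsGT hab)).tendsto.neg

/-- The counterterms subtracted in the finite part integral of `e^{-x} / x^{p+1}`; in the theorem
`n = j + 1` and `p = j + ν`. -/
noncomputable def expNegCounterterm (n : ℕ) (p ε : ℝ) : ℝ :=
  ∑ k ∈ Finset.range n, (-1 : ℝ) ^ k / ((k.factorial : ℝ) * (p - k)) * ε ^ (-(p - k))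

lemma intervalIntegral_exp_neg_div_rpow_sub_expNegCounterterm {n : ℕ} {p ε a : ℝ}
    (hp : ∀ k < n, p ≠ k) (hε : 0 < ε) (ha : 0 < a) :
    (∫ x in ε..a, Real.exp (-x) / x ^ (p + 1)) - expNegCounterterm n p ε =
      (∫ x in ε..a, expNegTaylorRemainder n x * x ^ (-(p + 1))) - expNegCounterterm n p a := by
  have h0 : (0 : ℝ) ∉ uIcc ε a := notMem_uIcc_of_lt hε ha
  have hsplit : EqOn (fun x => Real.exp (-x) / x ^ (p + 1))
      (fun x => ∑ k ∈ Finset.range n, (-1 : ℝ) ^ k / k.factorial * x ^ (-(p - k) - 1) +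
        expNegTaylorRemainder n x * x ^ (-(p + 1))) (uIcc ε a) := by
    intro x hx
    have hx0 : 0 < x := lt_of_lt_of_le (lt_min hε ha) hx.1
    have hpow : ∀ k : ℕ, (-x) ^ k / k.factorial * x ^ (-(p + 1)) =
        (-1 : ℝ) ^ k / k.factorial * x ^ (-(p - k) - 1) := fun k => by
      rw [show -(p - k) - 1 = -(p + 1) + k by ring, Real.rpow_add_natCast hx0.ne', neg_pow]
      ring
    simp_rw [← hpow]
    rw [← Finset.sum_mul, ← add_mul, expNegTaylorRemainder, add_sub_cancel, Real.rpow_neg hx0.le,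
      div_eq_mul_inv]
  have hterm : ∀ k ∈ Finset.range n, IntervalIntegrable
      (fun x => (-1 : ℝ) ^ k / k.factorial * x ^ (-(p - k) - 1)) volume ε a := fun k _ =>
    (intervalIntegral.intervalIntegrable_rpow (Or.inr h0)).const_mul _
  have hrem : IntervalIntegrable (fun x => expNegTaylorRemainder n x * x ^ (-(p + 1))) volume ε a :=
    (intervalIntegral.intervalIntegrable_rpow (Or.inr h0)).continuousOn_mul
      (continuous_expNegTaylorRemainder n).continuousOn
  have hsum : IntervalIntegrable (fun x => ∑ k ∈ Finset.range n,
      (-1 : ℝ) ^ k / k.factorial * x ^ (-(p - k) - 1)) volume ε a := by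
    simpa only [Finset.sum_fn] using IntervalIntegrable.sum _ hterm
  have hpoly : ∑ k ∈ Finset.range n, ∫ x in ε..a, (-1 : ℝ) ^ k / k.factorial * x ^ (-(p - k) - 1) =
      expNegCounterterm n p ε - expNegCounterterm n p a := by
    rw [expNegCounterterm, expNegCounterterm, ← Finset.sum_sub_distrib]
    refine Finset.sum_congr rfl fun k hk => ?_
    rw [intervalIntegral.integral_const_mul, intervalIntegral_rpow_neg_sub_one
      (sub_ne_zero.2 (hp k (Finset.mem_range.1 hk))) hε ha, div_mul_eq_div_div]
    ring
  rw [intervalIntegral.integral_congr hsplit, intervalIntegral.integral_add hsum hrem,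
    intervalIntegral.integral_finsetSum hterm, hpoly]
  ring

lemma tendsto_expNegCounterterm_atTop {n : ℕ} {p : ℝ} (hp : ∀ k < n, (k : ℝ) < p) :
    Tendsto (expNegCounterterm n p) atTop (𝓝 0) := by
  rw [← Finset.sum_const_zero (s := Finset.range n)]
  refine tendsto_finsetSum _ fun k hk => ?_
  simpa using (tendsto_rpow_neg_atTop (sub_pos.2 (hp k (Finset.mem_range.1 hk)))).const_mul
    ((-1 : ℝ) ^ k / ((k.factorial : ℝ) * (p - k)))

/-- For every `j ∈ ℕ` and `0 < ν < 1`, the finite part integral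
`⨍_0^a e^{−x}/x^{j+1+ν} dx` (given as the function `G` of `a` by the inner limit `ε → 0⁺`)
tends, as `a → ∞`, to `(−1)^{j+1} Γ(1−ν) Γ(ν) / Γ(j+ν+1)`. -/
theorem finite_part_exp_branch_limit (j : ℕ) (ν : ℝ) (hν0 : 0 < ν) (hν1 : ν < 1)
    (G : ℝ → ℝ)
    (hG : ∀ a : ℝ, 0 < a → Tendsto (fun ε : ℝ =>
        (∫ x in ε..a, Real.exp (-x) / x ^ ((j : ℝ) + 1 + ν))
        - (∑ k ∈ Finset.range (j + 1),
            (-1 : ℝ) ^ k / ((k.factorial : ℝ) * ((j : ℝ) + ν - k)) *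
              ε ^ (-((j : ℝ) + ν - k))))
      (nhdsWithin 0 (Ioi 0)) (nhds (G a))) :
    Tendsto G atTop
      (nhds ((-1 : ℝ) ^ (j + 1) * Real.Gamma (1 - ν) * Real.Gamma ν /
        Real.Gamma ((j : ℝ) + ν + 1))) := by
  have hkp : ∀ k < j + 1, (k : ℝ) < j + ν := fun k hk => by
    have : (k : ℝ) ≤ j := by exact_mod_cast Nat.lt_succ_iff.1 hk
    linarith
  have hval := integral_expNegTaylorRemainder_mul_rpow (j + 1) hν0 hν1
  have hint := integrableOn_expNegTaylorRemainder_mul_rpow (j + 1) hν0 hν1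
  rw [Nat.cast_succ, add_right_comm] at hval hint
  rw [add_right_comm] at hG
  have hGa : ∀ a, 0 < a → G a = (∫ x in 0..a, expNegTaylorRemainder (j + 1) x *
      x ^ (-((j : ℝ) + ν + 1))) - expNegCounterterm (j + 1) (j + ν) a := by
    intro a ha
    have hsplit := fun ε (hε : 0 < ε) =>
      intervalIntegral_exp_neg_div_rpow_sub_expNegCounterterm (fun k hk => (hkp k hk).ne') hε ha
    have hrem := (intervalIntegrable_iff_integrableOn_Ioc_of_le ha.le).2
      (hint.mono_set Ioc_subset_Ioi_self)
    refine tendsto_nhds_unique ((hG a ha).congr' ?_)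
      ((tendsto_intervalIntegral_nhdsGT_s15 ha hrem).sub_const _)
    filter_upwards [self_mem_nhdsWithin] with ε hε using hsplit ε hε
  have hlim := (intervalIntegral_tendsto_integral_Ioi 0 hint tendsto_id).sub
    (tendsto_expNegCounterterm_atTop hkp)
  rw [hval, sub_zero] at hlim
  exact hlim.congr' (by filter_upwards [eventually_gt_atTop 0] with a ha using (hGa a ha).symm)
end
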